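/- arXiv:math/0206244 — 2 statements merged into one kernel-verified Lean document; each statement's English description precedes it below -/
import Mathlib

section
/- Let k be a field of characteristic zero and let J be a nonzero ideal of k[x_1,...,x_n]. Then there exists a nonnegative integer b such that Δ^b(J) = (1), where Δ^b denotes the b-fold iteration of the operator Δ. -/
open MvPolynomial

/-- The operator `Δ` on ideals of `k[x_1,...,x_n]`: the ideal generated by `J` together
with all first partial derivatives of elements of `J`. -/
noncomputable def Delta {k : Type*} [CommSemiring k] {n : ℕ}
    (J : Ideal (MvPolynomial (Fin n) k)) : Ideal (MvPolynomial (Fin n) k) :=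
  Ideal.span ((J : Set (MvPolynomial (Fin n) k)) ∪
    {g | ∃ f ∈ J, ∃ i : Fin n, g = pderiv i f})

lemma coeff_pderiv_aux {k : Type*} [CommSemiring k] {n : ℕ} (i : Fin n)
    (s : (Fin n) →₀ ℕ) (f : MvPolynomial (Fin n) k) :
    coeff s (pderiv i f) = (s i + 1 : ℕ) * coeff (s + Finsupp.single i 1) f := by
  classical
  induction f using MvPolynomial.induction_on' with
  | add p q hp hq => simp [map_add, coeff_add, hp, hq, mul_add]
  | monomial t a =>
    rw [pderiv_monomial, coeff_monomial, coeff_monomial]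
    split_ifs with h1 h2 h2
    · subst h2
      rw [Finsupp.add_apply, Finsupp.single_apply, if_pos rfl]
      push_cast
      ring
    · -- t - single i 1 = s but t ≠ s + single i 1, so t i = 0
      have hti : t i = 0 := by
        by_contra hti
        apply h2
        ext j
        rw [Finsupp.add_apply, Finsupp.single_apply, ← h1, Finsupp.tsub_apply,
          Finsupp.single_apply]
        split_ifs with hjEq
        · subst hjEq; omega
        · omega
      simp [hti]
    · exfalso; apply h1; subst h2; ext j; simp
    · ring

lemma exists_pderiv_ne_zero {k : Type*} [Field k] [CharZero k] {n : ℕ}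
    (f : MvPolynomial (Fin n) k) (hf : f.totalDegree ≠ 0) :
    ∃ i : Fin n, pderiv i f ≠ 0 ∧ (pderiv i f).totalDegree < f.totalDegree := by
  classical
  have hf0 : f ≠ 0 := by rintro rfl; simp at hf
  obtain ⟨m, hm, hm'⟩ := f.support.exists_mem_eq_sup
    (support_nonempty.mpr hf0) fun m => m.sum fun _ e => e
  have htd : f.totalDegree = m.sum fun _ e => e := by rw [totalDegree, hm']
  have : ∃ i, m i ≠ 0 := by
    by_contra h
    push_neg at h
    apply hf
    rw [htd]
    exact Finsupp.sum_congr (fun j _ => h j) |>.trans (Finsupp.sum_fun_zero _)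
  obtain ⟨i, hi⟩ := this
  set s : Fin n →₀ ℕ := m - Finsupp.single i 1 with hsdef
  have hms : s + Finsupp.single i 1 = m := by
    ext j
    rw [Finsupp.add_apply, Finsupp.single_apply, hsdef, Finsupp.tsub_apply,
      Finsupp.single_apply]
    split_ifs with hjEq
    · subst hjEq; omega
    · omega
  refine ⟨i, ?_, ?_⟩
  · intro hzero
    have hkey := coeff_pderiv_aux i s f
    rw [hzero, hms] at hkey
    have hc : coeff m f ≠ 0 := mem_support_iff.mp hm
    have hnat : ((s i + 1 : ℕ) : k) ≠ 0 := Nat.cast_ne_zero.mpr (by omega)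
    simp only [coeff_zero] at hkey
    exact (mul_ne_zero hnat hc) hkey.symm
  · rw [totalDegree]
    rw [Finset.sup_lt_iff (Nat.pos_of_ne_zero hf)]
    intro t ht
    have hct : coeff (t + Finsupp.single i 1) f ≠ 0 := by
      intro h0
      apply mem_support_iff.mp ht
      rw [coeff_pderiv_aux, h0, mul_zero]
    have hle : ((t + Finsupp.single i 1).sum fun _ e => e) ≤ f.totalDegree :=
      le_totalDegree (mem_support_iff.mpr hct)
    have hsum : ((t + Finsupp.single i 1).sum fun _ e => e)
        = (t.sum fun _ e => e) + 1 := by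
      rw [Finsupp.sum_add_index (by simp) (by intros; rfl)]
      simp
    omega

lemma eq_C_of_totalDegree_eq_zero' {k : Type*} [CommSemiring k] {n : ℕ}
    {f : MvPolynomial (Fin n) k} (h : f.totalDegree = 0) : f = C (coeff 0 f) := by
  ext m
  by_cases hm : m = 0
  · subst hm; simp
  · rw [coeff_C, if_neg (Ne.symm hm)]
    by_contra hc
    have := (totalDegree_eq_zero_iff _ f).mp h m (mem_support_iff.mpr hc)
    exact hm (Finsupp.ext fun j => this j)

lemma delta_key {k : Type*} [Field k] [CharZero k] {n : ℕ} :
    ∀ d : ℕ, ∀ J : Ideal (MvPolynomial (Fin n) k), ∀ f : MvPolynomial (Fin n) k,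
      f ∈ J → f ≠ 0 → f.totalDegree ≤ d → ∃ b : ℕ, Delta^[b] J = ⊤ := by
  intro d
  induction d with
  | zero =>
    intro J f hfJ hf0 hdeg
    refine ⟨0, ?_⟩
    simp only [Function.iterate_zero, id]
    have hdeg0 : f.totalDegree = 0 := Nat.le_zero.mp hdeg
    have hfC := eq_C_of_totalDegree_eq_zero' hdeg0
    have hc : coeff 0 f ≠ 0 := fun h => hf0 (by rw [hfC, h, map_zero])
    have hu : IsUnit f := hfC ▸ IsUnit.of_mul_eq_one (C (coeff 0 f)⁻¹)
      (by rw [← C_mul, mul_inv_cancel₀ hc, C_1])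
    exact Ideal.eq_top_of_isUnit_mem J hfJ hu
  | succ d ih =>
    intro J f hfJ hf0 hdeg
    by_cases hd0 : f.totalDegree = 0
    · have hfC := eq_C_of_totalDegree_eq_zero' hd0
      have hc : coeff 0 f ≠ 0 := fun h => hf0 (by rw [hfC, h, map_zero])
      have hu : IsUnit f := hfC ▸ IsUnit.of_mul_eq_one (C (coeff 0 f)⁻¹)
        (by rw [← C_mul, mul_inv_cancel₀ hc, C_1])
      exact ⟨0, Ideal.eq_top_of_isUnit_mem J hfJ hu⟩
    · obtain ⟨i, hne, hlt⟩ := exists_pderiv_ne_zero f hd0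
      have hmem : pderiv i f ∈ Delta J := by
        apply Ideal.subset_span
        exact Or.inr ⟨f, hfJ, i, rfl⟩
      obtain ⟨b, hb⟩ := ih (Delta J) (pderiv i f) hmem hne (by omega)
      exact ⟨b + 1, by rwa [Function.iterate_succ_apply]⟩

/-- over a field of characteristic zero, for every nonzero ideal `J`
of `k[x_1,...,x_n]` there is `b` with `Δ^b(J) = (1)`. -/
theorem exists_iterate_delta_eq_top {k : Type*} [Field k] [CharZero k] {n : ℕ}
    (J : Ideal (MvPolynomial (Fin n) k)) (hJ : J ≠ ⊥) :
    ∃ b : ℕ, Delta^[b] J = ⊤ := by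
  obtain ⟨f, hfJ, hf0⟩ := Submodule.exists_mem_ne_zero_of_ne_bot hJ
  exact delta_key f.totalDegree J f hfJ hf0 le_rfl
end

section
/- Let X be a topological space, and let w : X → ℚ and n : X → ℤ be upper semicontinuous functions such that w takes only finitely many values. Then the function t : X → ℚ × ℤ, t(x) = (w(x), n(x)), is upper semicontinuous with respect to the lexicographic order on ℚ × ℤ, i.e., for each (q, m) the set { x : t(x) ≥_lex (q, m) } is closed. -/
/-- if `w : X → ℚ` and `n : X → ℤ` are upper semicontinuous and `w` takes
finitely many values, then `t = (w, n)` is upper semicontinuous for the lexicographic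
order on `ℚ × ℤ`. -/
theorem lex_pair_upper_semicontinuous {X : Type*} [TopologicalSpace X]
    (w : X → ℚ) (n : X → ℤ)
    (hw : ∀ q : ℚ, IsClosed {x : X | q ≤ w x})
    (hn : ∀ m : ℤ, IsClosed {x : X | m ≤ n x})
    (hfin : (Set.range w).Finite) (q : ℚ) (m : ℤ) :
    IsClosed {x : X | toLex (q, m) ≤ toLex (w x, n x)} := by
  have hlt : IsClosed {x : X | q < w x} := by
    have : {x : X | q < w x} = ⋃ r ∈ {r ∈ Set.range w | q < r}, {x : X | r ≤ w x} := by
      ext x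
      simp only [Set.mem_setOf_eq, Set.mem_iUnion, Set.mem_sep_iff, Set.mem_range]
      constructor
      · intro h; exact ⟨w x, ⟨⟨x, rfl⟩, h⟩, le_refl _⟩
      · rintro ⟨r, ⟨_, hqr⟩, hrw⟩; exact lt_of_lt_of_le hqr hrw
    rw [this]
    exact (hfin.sep _).isClosed_biUnion (fun r _ => hw r)
  have key : {x : X | toLex (q, m) ≤ toLex (w x, n x)}
      = {x : X | q < w x} ∪ ({x : X | q ≤ w x} ∩ {x : X | m ≤ n x}) := by
    ext x
    simp only [Set.mem_setOf_eq, Set.mem_union, Set.mem_inter_iff, Prod.Lex.le_iff]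
    constructor
    · rintro (h | ⟨h1, h2⟩)
      · exact Or.inl h
      · exact Or.inr ⟨le_of_eq h1, h2⟩
    · rintro (h | ⟨h1, h2⟩)
      · exact Or.inl h
      · rcases lt_or_eq_of_le h1 with h | h
        · exact Or.inl h
        · exact Or.inr ⟨h, h2⟩
  rw [key]
  exact hlt.union ((hw q).inter (hn m))
end
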